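/- arXiv:2401.03561 — 3 statements merged into one kernel-verified Lean document; each statement's English description precedes it below -/
import Mathlib

section
/- Let V and Q be real Hilbert spaces, A : V × V → ℝ a bounded symmetric bilinear form that is coercive on V (A(v,v) ≥ α‖v‖² with α > 0), and b : V × Q → ℝ a bounded bilinear form satisfying the inf-sup condition with constant β > 0. Define the bilinear form 𝒜 on (V × Q) by 𝒜((u,p),(v,q)) = A(u,v) + b(v,p) + b(u,q). Then there exists a constant γ > 0, depending only on α, β, and the continuity constants, such that for all (u,p) ∈ V × Q: sup_{(v,q) ≠ 0} 𝒜((u,p),(v,q)) / (‖v‖² + ‖q‖²)^{1/2} ≥ γ(‖u‖² + ‖p‖²)^{1/2}. -/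
set_option maxHeartbeats 1000000


/-- Stability of the saddle-point bilinear form
`𝒜((u,p),(v,q)) = A(u,v) + b(v,p) + b(u,q)`: if `A` is bounded, symmetric and
coercive and `b` is bounded and satisfies the inf-sup condition, then `𝒜`
satisfies a stability (inf-sup) estimate with a constant `γ > 0` depending only
on `α`, `β`, `C_A`, `C_b`. -/
theorem stmt2
    {V Q : Type*} [NormedAddCommGroup V] [InnerProductSpace ℝ V] [CompleteSpace V]
    [NormedAddCommGroup Q] [InnerProductSpace ℝ Q] [CompleteSpace Q]
    (A : V →ₗ[ℝ] V →ₗ[ℝ] ℝ) (b : V →ₗ[ℝ] Q →ₗ[ℝ] ℝ)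
    (CA Cb α β : ℝ) (hα : 0 < α) (hβ : 0 < β)
    (hAbound : ∀ u v, |A u v| ≤ CA * ‖u‖ * ‖v‖)
    (hAsymm : ∀ u v, A u v = A v u)
    (hAcoer : ∀ v : V, α * ‖v‖ ^ 2 ≤ A v v)
    (hbbound : ∀ v q, |b v q| ≤ Cb * ‖v‖ * ‖q‖)
    (hinfsup : ∀ q : Q, β * ‖q‖ ≤ ⨆ v : {v : V // v ≠ 0}, b v.1 q / ‖v.1‖) :
    ∃ γ : ℝ, 0 < γ ∧
      ∀ (u : V) (p : Q),
        γ * Real.sqrt (‖u‖ ^ 2 + ‖p‖ ^ 2) ≤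
          ⨆ vq : {vq : V × Q // vq ≠ 0},
            (A u vq.1.1 + b vq.1.1 p + b u vq.1.2) /
              Real.sqrt (‖vq.1.1‖ ^ 2 + ‖vq.1.2‖ ^ 2) := by
  classical
  set CA' := max CA 0 with hCA'
  set Cb' := max Cb 0 with hCb'
  have hCA0 : 0 ≤ CA' := le_max_right _ _
  have hCb0 : 0 ≤ Cb' := le_max_right _ _
  set D := α * β ^ 2 with hD
  set E := (β ^ 2 + 2 * CA' ^ 2) + 2 * α + D + 1 with hE
  have hDpos : 0 < D := by positivity
  have hEpos : 0 < E := by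
    have : 0 < β ^ 2 := by positivity
    nlinarith [sq_nonneg CA']
  refine ⟨D / E, by positivity, fun u p => ?_⟩
  set N := Real.sqrt (‖u‖ ^ 2 + ‖p‖ ^ 2) with hNdef
  have hN0 : 0 ≤ N := Real.sqrt_nonneg _
  set F : {vq : V × Q // vq ≠ 0} → ℝ := fun vq =>
    (A u vq.1.1 + b vq.1.1 p + b u vq.1.2) /
      Real.sqrt (‖vq.1.1‖ ^ 2 + ‖vq.1.2‖ ^ 2) with hF
  -- positivity of denominators
  have hpos : ∀ vq : {vq : V × Q // vq ≠ 0},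
      0 < Real.sqrt (‖vq.1.1‖ ^ 2 + ‖vq.1.2‖ ^ 2) := by
    rintro ⟨⟨v, q⟩, hvq⟩
    have hsum : 0 < ‖v‖ ^ 2 + ‖q‖ ^ 2 := by
      rcases eq_or_ne v 0 with hv | hv
      · rcases eq_or_ne q 0 with hq | hq
        · exact absurd (by simp [hv, hq, Prod.ext_iff]) hvq
        · have h1 : 0 < ‖q‖ := norm_pos_iff.mpr hq
          nlinarith [sq_nonneg ‖v‖]
      · have h1 : 0 < ‖v‖ := norm_pos_iff.mpr hv
        nlinarith [sq_nonneg ‖q‖]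
    exact Real.sqrt_pos.mpr hsum
  -- boundedness of the range
  have hbdd : BddAbove (Set.range F) := by
    refine ⟨CA' * ‖u‖ + Cb' * ‖p‖ + Cb' * ‖u‖, ?_⟩
    rintro x ⟨vq, rfl⟩
    have hd := hpos vq
    obtain ⟨⟨v, q⟩, hvq⟩ := vq
    simp only [hF]
    rw [div_le_iff₀ hd]
    set d := Real.sqrt (‖v‖ ^ 2 + ‖q‖ ^ 2) with hdd
    have hv_le : ‖v‖ ≤ d := by
      rw [show ‖v‖ = Real.sqrt (‖v‖ ^ 2) from (Real.sqrt_sq (norm_nonneg v)).symm]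
      exact Real.sqrt_le_sqrt (by nlinarith [sq_nonneg ‖q‖])
    have hq_le : ‖q‖ ≤ d := by
      rw [show ‖q‖ = Real.sqrt (‖q‖ ^ 2) from (Real.sqrt_sq (norm_nonneg q)).symm]
      exact Real.sqrt_le_sqrt (by nlinarith [sq_nonneg ‖v‖])
    have h1 : A u v ≤ CA' * ‖u‖ * ‖v‖ := by
      have := hAbound u v
      nlinarith [le_abs_self (A u v),
        mul_le_mul_of_nonneg_right (le_max_left CA 0)
          (mul_nonneg (norm_nonneg u) (norm_nonneg v))]
    have h2 : b v p ≤ Cb' * ‖v‖ * ‖p‖ := by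
      have := hbbound v p
      nlinarith [le_abs_self (b v p),
        mul_le_mul_of_nonneg_right (le_max_left Cb 0)
          (mul_nonneg (norm_nonneg v) (norm_nonneg p))]
    have h3 : b u q ≤ Cb' * ‖u‖ * ‖q‖ := by
      have := hbbound u q
      nlinarith [le_abs_self (b u q),
        mul_le_mul_of_nonneg_right (le_max_left Cb 0)
          (mul_nonneg (norm_nonneg u) (norm_nonneg q))]
    have h4 : CA' * ‖u‖ * ‖v‖ ≤ CA' * ‖u‖ * d :=
      mul_le_mul_of_nonneg_left hv_le (by positivity)
    have h5 : Cb' * ‖v‖ * ‖p‖ ≤ Cb' * ‖p‖ * d := by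
      calc Cb' * ‖v‖ * ‖p‖ = Cb' * ‖p‖ * ‖v‖ := by ring
        _ ≤ Cb' * ‖p‖ * d := mul_le_mul_of_nonneg_left hv_le (by positivity)
    have h6 : Cb' * ‖u‖ * ‖q‖ ≤ Cb' * ‖u‖ * d :=
      mul_le_mul_of_nonneg_left hq_le (by positivity)
    have hexp : (CA' * ‖u‖ + Cb' * ‖p‖ + Cb' * ‖u‖) * d
        = CA' * ‖u‖ * d + Cb' * ‖p‖ * d + Cb' * ‖u‖ * d := by ring
    linarith [h1, h2, h3, h4, h5, h6]
  -- nonnegativity of the sup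
  have hS0 : 0 ≤ iSup F := by
    rcases isEmpty_or_nonempty {vq : V × Q // vq ≠ 0} with hne | hne
    · exact (Real.iSup_of_isEmpty F).ge
    · obtain ⟨x⟩ := hne
      have h1 := le_ciSup hbdd x
      have h2 := le_ciSup hbdd ⟨-x.1, neg_ne_zero.mpr x.2⟩
      have hx : F ⟨-x.1, neg_ne_zero.mpr x.2⟩ + F x = 0 := by
        obtain ⟨⟨v, q⟩, hvq⟩ := x
        simp only [hF, Prod.fst_neg, Prod.snd_neg, map_neg, LinearMap.neg_apply,
          norm_neg]
        rw [← add_div,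
          show -A u v + -b v p + -b u q + (A u v + b v p + b u q) = 0 by ring,
          zero_div]
      linarith
  -- key estimate 1 : coercivity transferred
  have key1 : α * ‖u‖ ^ 2 ≤ iSup F * N := by
    by_cases hup : (u, -p) = (0 : V × Q)
    · have hu : u = 0 := congrArg Prod.fst hup
      rw [hu]
      simp only [norm_zero]
      nlinarith [mul_nonneg hS0 hN0]
    · have h := le_ciSup hbdd ⟨(u, -p), hup⟩
      simp only [hF, map_neg, norm_neg] at h
      rw [← hNdef] at h
      have hor : u ≠ 0 ∨ p ≠ 0 := by
        by_contra hc
        push_neg at hc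
        exact hup (by simp [hc.1, hc.2, Prod.ext_iff])
      have hNpos : 0 < N := by
        rw [hNdef]
        apply Real.sqrt_pos.mpr
        rcases hor with h' | h'
        · nlinarith [norm_pos_iff.mpr h', sq_nonneg ‖p‖]
        · nlinarith [norm_pos_iff.mpr h', sq_nonneg ‖u‖]
      rw [show A u u + b u p + -b u p = A u u by ring] at h
      rw [div_le_iff₀ hNpos] at h
      nlinarith [hAcoer u]
  -- key estimate 2 : inf-sup transferred
  have key2 : β * ‖p‖ ≤ iSup F + CA' * ‖u‖ := by
    refine le_trans (hinfsup p) (Real.iSup_le ?_ ?_)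
    · rintro ⟨v, hv⟩
      have hvn : 0 < ‖v‖ := norm_pos_iff.mpr hv
      have h := le_ciSup hbdd ⟨(v, 0), by simp [Prod.ext_iff, hv]⟩
      simp only [hF, map_zero, norm_zero, add_zero] at h
      rw [show (0:ℝ) ^ 2 = 0 by ring, add_zero, Real.sqrt_sq (norm_nonneg v)] at h
      rw [div_le_iff₀ hvn] at h
      simp only []
      rw [div_le_iff₀ hvn]
      have hAle : -(A u v) ≤ CA' * ‖u‖ * ‖v‖ := by
        have := hAbound u v
        nlinarith [neg_abs_le (A u v),
          mul_le_mul_of_nonneg_right (le_max_left CA 0)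
            (mul_nonneg (norm_nonneg u) (norm_nonneg v))]
      nlinarith
    · exact add_nonneg hS0 (by positivity)
  -- key estimate 3 : quadratic inequality
  have hN2 : N ^ 2 = ‖u‖ ^ 2 + ‖p‖ ^ 2 := by
    rw [hNdef]; exact Real.sq_sqrt (by positivity)
  have key3 : D * N ^ 2 ≤ (β ^ 2 + 2 * CA' ^ 2) * (iSup F * N) + 2 * α * (iSup F) ^ 2 := by
    have hp2 : (β * ‖p‖) ^ 2 ≤ (iSup F + CA' * ‖u‖) ^ 2 :=
      pow_le_pow_left₀ (by positivity) key2 2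
    have hsq : (iSup F + CA' * ‖u‖) ^ 2 ≤ 2 * (iSup F) ^ 2 + 2 * (CA' * ‖u‖) ^ 2 := by
      nlinarith [sq_nonneg (iSup F - CA' * ‖u‖)]
    have m1 : β ^ 2 * (α * ‖u‖ ^ 2) ≤ β ^ 2 * (iSup F * N) :=
      mul_le_mul_of_nonneg_left key1 (by positivity)
    have m2 : (2 * CA' ^ 2) * (α * ‖u‖ ^ 2) ≤ (2 * CA' ^ 2) * (iSup F * N) :=
      mul_le_mul_of_nonneg_left key1 (by positivity)
    have m3 : α * (β * ‖p‖) ^ 2 ≤ α * (2 * (iSup F) ^ 2 + 2 * (CA' * ‖u‖) ^ 2) :=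
      mul_le_mul_of_nonneg_left (le_trans hp2 hsq) hα.le
    nlinarith [m1, m2, m3, hN2]
  -- conclude
  rw [div_mul_eq_mul_div, div_le_iff₀ hEpos]
  by_contra hc
  push_neg at hc
  have hSEnn : 0 ≤ iSup F * E := mul_nonneg hS0 hEpos.le
  have hNpos : 0 < N := by
    rcases hN0.lt_or_eq with h | h
    · exact h
    · exfalso; nlinarith
  have hDE : D ≤ E := by nlinarith [sq_nonneg CA', pow_pos hβ 2]
  have hSltN : iSup F < N := by
    have h1 : D * N ≤ E * N := mul_le_mul_of_nonneg_right hDE hN0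
    exact (mul_lt_mul_iff_left₀ hEpos).mp (by linarith)
  have hS2 : iSup F * iSup F ≤ iSup F * N := mul_le_mul_of_nonneg_left hSltN.le hS0
  have hmult : iSup F * E * N < D * N * N := mul_lt_mul_of_pos_right hc hNpos
  have hSNnn : 0 ≤ iSup F * N := mul_nonneg hS0 hNpos.le
  nlinarith [hmult, key3, hS2, hSNnn, mul_nonneg hDpos.le hSNnn]
end

section
/- Let A be a symmetric positive definite n×n real matrix, B an m×n real matrix, and S = B A^{-1} Bᵀ the Schur complement. Then for every λ ∈ ℝᵐ, ⟨Sλ, λ⟩ = (sup_{v ∈ ℝⁿ, v ≠ 0} ⟨Bv, λ⟩ / ⟨Av, v⟩^{1/2})². -/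
open Matrix

lemma symm_dot {n : ℕ} {A : Matrix (Fin n) (Fin n) ℝ} (hA : A.IsHermitian)
    (x y : Fin n → ℝ) : A.mulVec x ⬝ᵥ y = A.mulVec y ⬝ᵥ x := by
  rw [dotProduct_comm, dotProduct_mulVec, ← mulVec_transpose]
  congr 1
  rw [← conjTranspose_eq_transpose_of_trivial, hA.eq]

lemma cs_lemma {n : ℕ} {A : Matrix (Fin n) (Fin n) ℝ} (hA : A.PosDef)
    (x y : Fin n → ℝ) :
    (A.mulVec x ⬝ᵥ y) ^ 2 ≤ (A.mulVec x ⬝ᵥ x) * (A.mulVec y ⬝ᵥ y) := by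
  have key : discrim (A.mulVec y ⬝ᵥ y) (2 * (A.mulVec x ⬝ᵥ y)) (A.mulVec x ⬝ᵥ x) ≤ 0 := by
    apply discrim_le_zero
    intro t
    have h0 := hA.posSemidef.dotProduct_mulVec_nonneg (x + t • y)
    have hexp : A.mulVec (x + t • y) ⬝ᵥ (x + t • y)
        = A.mulVec y ⬝ᵥ y * (t * t) + 2 * (A.mulVec x ⬝ᵥ y) * t + A.mulVec x ⬝ᵥ x := by
      simp only [mulVec_add, mulVec_smul, add_dotProduct, dotProduct_add, smul_dotProduct,
        dotProduct_smul, symm_dot hA.isHermitian y x, smul_eq_mul]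
      ring
    calc (0:ℝ) ≤ A.mulVec (x + t • y) ⬝ᵥ (x + t • y) := by
              simpa [dotProduct_comm] using h0
      _ = _ := hexp
  rw [discrim] at key
  nlinarith [key]

/-- For `A` symmetric positive definite and `S = B A⁻¹ Bᵀ`,
`⟨Sλ,λ⟩ = (sup_{v ≠ 0} ⟨Bv,λ⟩/⟨Av,v⟩^{1/2})²`. -/
theorem stmt5
    {n m : ℕ} (A : Matrix (Fin n) (Fin n) ℝ) (B : Matrix (Fin m) (Fin n) ℝ)
    (hA : A.PosDef)
    (S : Matrix (Fin m) (Fin m) ℝ) (hS : S = B * A⁻¹ * Bᵀ)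
    (lam : Fin m → ℝ) (hn : 0 < n) :
    S.mulVec lam ⬝ᵥ lam =
      (⨆ v : {v : Fin n → ℝ // v ≠ 0},
        (B.mulVec v.1 ⬝ᵥ lam) / Real.sqrt (A.mulVec v.1 ⬝ᵥ v.1)) ^ 2 := by
  have hdet : IsUnit A.det := isUnit_iff_ne_zero.mpr hA.det_pos.ne'
  set w : Fin n → ℝ := A⁻¹.mulVec (Bᵀ.mulVec lam) with hw_def
  have hAw : A.mulVec w = Bᵀ.mulVec lam := by
    rw [hw_def, mulVec_mulVec, Matrix.mul_nonsing_inv A hdet, one_mulVec]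
  have hnum : ∀ v : Fin n → ℝ, B.mulVec v ⬝ᵥ lam = A.mulVec w ⬝ᵥ v := by
    intro v
    rw [dotProduct_comm, dotProduct_mulVec, ← mulVec_transpose, hAw]
  have hSll : S.mulVec lam ⬝ᵥ lam = A.mulVec w ⬝ᵥ w := by
    rw [hS, ← hnum w, hw_def]
    congr 1
    rw [← mulVec_mulVec, ← mulVec_mulVec]
  have hww : 0 ≤ A.mulVec w ⬝ᵥ w := by
    simpa [dotProduct_comm] using hA.posSemidef.dotProduct_mulVec_nonneg w
  set c : ℝ := Real.sqrt (A.mulVec w ⬝ᵥ w) with hc_def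
  have hc2 : c ^ 2 = A.mulVec w ⬝ᵥ w := Real.sq_sqrt hww
  set f : {v : Fin n → ℝ // v ≠ 0} → ℝ :=
    fun v => (B.mulVec v.1 ⬝ᵥ lam) / Real.sqrt (A.mulVec v.1 ⬝ᵥ v.1) with hf_def
  have hposv : ∀ v : Fin n → ℝ, v ≠ 0 → 0 < A.mulVec v ⬝ᵥ v := by
    intro v hv
    simpa [dotProduct_comm] using hA.dotProduct_mulVec_pos hv
  have hub : ∀ v : {v : Fin n → ℝ // v ≠ 0}, f v ≤ c := by
    rintro ⟨v, hv⟩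
    have hpos := hposv v hv
    have hs : 0 < Real.sqrt (A.mulVec v ⬝ᵥ v) := Real.sqrt_pos.mpr hpos
    rw [hf_def]
    simp only
    rw [div_le_iff₀ hs, hnum v]
    calc A.mulVec w ⬝ᵥ v ≤ |A.mulVec w ⬝ᵥ v| := le_abs_self _
      _ = Real.sqrt ((A.mulVec w ⬝ᵥ v) ^ 2) := (Real.sqrt_sq_eq_abs _).symm
      _ ≤ Real.sqrt ((A.mulVec w ⬝ᵥ w) * (A.mulVec v ⬝ᵥ v)) :=
          Real.sqrt_le_sqrt (cs_lemma hA w v)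
      _ = c * Real.sqrt (A.mulVec v ⬝ᵥ v) := Real.sqrt_mul hww _
  have hne : Nonempty {v : Fin n → ℝ // v ≠ 0} := by
    refine ⟨⟨fun _ => 1, ?_⟩⟩
    intro h
    have := congrFun h ⟨0, hn⟩
    simp at this
  have hbdd : BddAbove (Set.range f) := ⟨c, by rintro _ ⟨v, rfl⟩; exact hub v⟩
  have hsup : (⨆ v, f v) = c := by
    refine le_antisymm (ciSup_le hub) ?_
    rcases eq_or_ne w 0 with hw | hw
    · have hc0 : c = 0 := by rw [hc_def, hw]; simp
      obtain ⟨v0⟩ := hne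
      have : f v0 = 0 := by
        rw [hf_def]; simp only
        rw [hnum v0.1, hw]
        simp
      rw [hc0, ← this]
      exact le_ciSup hbdd v0
    · have : f ⟨w, hw⟩ = c := by
        rw [hf_def]; simp only
        rw [hnum w, symm_dot hA.isHermitian w w, hc_def, Real.div_sqrt]
      rw [← this]
      exact le_ciSup hbdd ⟨w, hw⟩
  rw [hSll, hsup, hc2]
end

section
/- Let P = I − nnᵀ and P_h = I − n_h n_hᵀ be orthogonal projections in ℝ³ associated with unit vectors n and n_h with ‖n − n_h‖ ≤ δ ≤ 1. Then ‖P − P P_h P‖ ≤ C δ² for an absolute constant C (e.g. C = 4), where ‖·‖ is the spectral matrix norm. -/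
/-- For orthogonal projections `P = I − nnᵀ`, `P_h = I − n_h n_hᵀ`
associated with unit vectors `n, n_h` with `‖n − n_h‖ ≤ δ ≤ 1`, one has
`‖P − P P_h P‖ ≤ 4 δ²` in the operator (spectral) norm. -/
theorem stmt9
    (n nh : EuclideanSpace ℝ (Fin 3)) (hn : ‖n‖ = 1) (hnh : ‖nh‖ = 1)
    (δ : ℝ) (hδ0 : 0 ≤ δ) (hδ1 : δ ≤ 1) (hclose : ‖n - nh‖ ≤ δ)
    (P Ph : EuclideanSpace ℝ (Fin 3) →L[ℝ] EuclideanSpace ℝ (Fin 3))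
    (hP : ∀ v, P v = v - (inner ℝ n v : ℝ) • n)
    (hPh : ∀ v, Ph v = v - (inner ℝ nh v : ℝ) • nh) :
    ‖P - P ∘L Ph ∘L P‖ ≤ 4 * δ ^ 2 := by
  have hnn : (inner ℝ n n : ℝ) = 1 := by
    rw [real_inner_self_eq_norm_sq, hn]; norm_num
  have hnhnh : (inner ℝ nh nh : ℝ) = 1 := by
    rw [real_inner_self_eq_norm_sq, hnh]; norm_num
  set c : ℝ := inner ℝ n nh with hc
  have hcomm : (inner ℝ nh n : ℝ) = c := (real_inner_comm n nh).trans hc.symm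
  set q : EuclideanSpace ℝ (Fin 3) := nh - c • n with hq
  have hPnh : P nh = q := by rw [hP]
  -- ‖q‖² = 1 - c²
  have hqsq : ‖q‖ ^ 2 = 1 - c ^ 2 := by
    rw [← real_inner_self_eq_norm_sq, hq]
    simp only [inner_sub_left, inner_sub_right, inner_smul_left, inner_smul_right,
      RCLike.ofReal_real_eq_id, id_eq]
    rw [hnn, hnhnh]
    simp only [starRingEnd_apply, star_trivial]
    rw [hcomm]
    ring
  have hcle : c ≤ 1 := by
    calc c ≤ ‖n‖ * ‖nh‖ := real_inner_le_norm n nh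
    _ = 1 := by rw [hn, hnh]; ring
  have hdist : ‖n - nh‖ ^ 2 = 2 - 2 * c := by
    rw [norm_sub_sq_real, hn, hnh, ← hc]; ring
  have hqδ : ‖q‖ ^ 2 ≤ δ ^ 2 := by
    have h1 : ‖n - nh‖ ^ 2 ≤ δ ^ 2 := by
      apply sq_le_sq' _ hclose
      have := norm_nonneg (n - nh); linarith
    rw [hqsq]; nlinarith
  -- key identity
  have key : ∀ v, (P - P ∘L Ph ∘L P) v = (inner ℝ q v : ℝ) • q := by
    intro v
    have hnPv : (inner ℝ n (P v) : ℝ) = 0 := by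
      rw [hP]
      simp only [inner_sub_right, inner_smul_right, ← hc]
      rw [hnn]; ring
    have hPPv : P (P v) = P v := by
      rw [hP (P v), hnPv]; simp
    have h1 : P (Ph (P v)) = P v - (inner ℝ nh (P v) : ℝ) • q := by
      rw [hPh (P v), map_sub, map_smul, hPnh, hPPv]
    have h2 : (inner ℝ nh (P v) : ℝ) = (inner ℝ q v : ℝ) := by
      rw [hP v, hq]
      simp only [inner_sub_left, inner_sub_right, inner_smul_left, inner_smul_right,
        RCLike.ofReal_real_eq_id, id_eq]
      simp only [starRingEnd_apply, star_trivial]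
      rw [hcomm]
      ring
    simp only [ContinuousLinearMap.sub_apply, ContinuousLinearMap.comp_apply, h1, h2]
    abel
  apply ContinuousLinearMap.opNorm_le_bound _ (by positivity)
  intro v
  rw [key v, norm_smul]
  have hiq : |(inner ℝ q v : ℝ)| ≤ ‖q‖ * ‖v‖ := abs_real_inner_le_norm q v
  have hqnn : ‖q‖ ≤ δ := by
    have := norm_nonneg q
    nlinarith
  calc ‖(inner ℝ q v : ℝ)‖ * ‖q‖ ≤ (‖q‖ * ‖v‖) * ‖q‖ := by
        apply mul_le_mul_of_nonneg_right _ (norm_nonneg q)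
        rwa [Real.norm_eq_abs]
    _ = ‖q‖ ^ 2 * ‖v‖ := by ring
    _ ≤ 4 * δ ^ 2 * ‖v‖ := by
        have := norm_nonneg v; nlinarith
end
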